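/- arXiv:1306.5742 — 3 statements merged into one kernel-verified Lean document; each statement's English description precedes it below -/
import Mathlib

section
/- For every nowhere-vanishing smooth complex function ψ on a segment J and all positive integers n, p, with F_m(ψ,q) = D^{m-1}(ψ^m D(ψ^q)) (and F_0(ψ,q) = ψ^q), one has 2·F_{n+p}(ψ, p) = D^p( Σ_{k=0}^{n} C(n,k) · F_k(ψ,p) · F_{n-k}(ψ,p) ). -/
open scoped Nat BigOperators
open Finset
set_option linter.unusedSectionVars false

/-- `F_m(ψ,q) = D^{m-1}(ψ^m · D(ψ^q))`, with `F_0(ψ,q) = ψ^q`.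
Derivatives are taken within `J`. -/
noncomputable def FS (J : Set ℝ) (ψ : ℝ → ℂ) : ℕ → ℤ → ℝ → ℂ
  | 0, q => fun t => ψ t ^ q
  | (m + 1), q => iteratedDerivWithin m (ψ ^ (m + 1) * derivWithin (fun t => ψ t ^ q) J) J

namespace Stmt14Aux

noncomputable def Lam (J : Set ℝ) (ψ : ℝ → ℂ) (n m : ℕ) (u v : ℝ → ℂ) : ℝ → ℂ :=
  fun t => ∑ k ∈ Finset.range (n+1), (n.choose k : ℂ) *
    (iteratedDerivWithin k (fun s => ψ s ^ k * u s) J t) *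
    (iteratedDerivWithin (n-k+m) (fun s => ψ s ^ (n-k) * v s) J t)

noncomputable def Gam (J : Set ℝ) (ψ : ℝ → ℂ) (n m : ℕ) : ℕ → (ℝ → ℂ) → (ℝ → ℂ) → ℝ → ℂ
  | 0, u, v => Lam J ψ n m u v
  | (r+1), u, v => fun t => Gam J ψ n m r u (fun s => ψ s * v s) t
      - Gam J ψ n m r (fun s => ψ s * u s) v t

noncomputable def Tee (J : Set ℝ) (ψ : ℝ → ℂ) (n r : ℕ) (w : ℝ → ℂ) : ℝ → ℂ :=
  fun t => ∑ j ∈ Finset.range (n+1), ((n.choose j * (n+r-j).descFactorial (n-j) : ℕ) : ℂ) *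
    iteratedDerivWithin j (fun s => ψ s ^ j * (derivWithin ψ J s)^(n+r-j) * w s) J t

noncomputable def Phi (J : Set ℝ) (ψ : ℝ → ℂ) (m : ℕ) : ℕ → (ℝ → ℂ) → ℝ → ℂ
  | 0, v => iteratedDerivWithin m v J
  | (r+1), v => fun t => Phi J ψ m r (fun s => ψ s * v s) t - ψ t * Phi J ψ m r v t

section Infra

variable {J : Set ℝ} {ψ : ℝ → ℂ} {f g : ℝ → ℂ} {t : ℝ}

/-- smoothness predicate -/
def Sm (J : Set ℝ) (f : ℝ → ℂ) : Prop := ContDiffOn ℝ (⊤:ℕ∞) f J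

lemma Sm.diff (hf : Sm J f) (ht : t ∈ J) : DifferentiableWithinAt ℝ f J t :=
  (hf.differentiableOn (by simp)) t ht


lemma Sm.mulp (hf : Sm J f) (hg : Sm J g) : Sm J (fun s => f s * g s) := hf.mul hg

lemma Sm.subp (hf : Sm J f) (hg : Sm J g) : Sm J (fun s => f s - g s) := hf.sub hg

variable (hU : UniqueDiffOn ℝ J)
include hU

lemma Sm.dw (hf : Sm J f) : Sm J (derivWithin f J) :=
  hf.derivWithin hU (by exact_mod_cast le_top)

lemma it_succ (k : ℕ) (f : ℝ → ℂ) (ht : t ∈ J) :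
    iteratedDerivWithin (k+1) f J t = derivWithin (iteratedDerivWithin k f J) J t :=
  congrFun iteratedDerivWithin_succ t

lemma it_succ' (k : ℕ) (f : ℝ → ℂ) (ht : t ∈ J) :
    iteratedDerivWithin (k+1) f J t = iteratedDerivWithin k (derivWithin f J) J t :=
  congrFun iteratedDerivWithin_succ' t

lemma Sm.it (hf : Sm J f) (k : ℕ) : Sm J (iteratedDerivWithin k f J) := by
  induction k generalizing f with
  | zero => simpa [iteratedDerivWithin_zero] using hf
  | succ k IH =>
    exact (IH (hf.dw hU)).congr (fun x hx => it_succ' hU k f hx)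

lemma dw_congr (hfg : Set.EqOn f g J) (ht : t ∈ J) :
    derivWithin f J t = derivWithin g J t :=
  derivWithin_congr hfg (hfg ht)

lemma it_congr (k : ℕ) (hfg : Set.EqOn f g J) :
    Set.EqOn (iteratedDerivWithin k f J) (iteratedDerivWithin k g J) J :=
  iteratedDerivWithin_congr hfg

lemma dw_mul (hf : Sm J f) (hg : Sm J g) (ht : t ∈ J) :
    derivWithin (fun s => f s * g s) J t
      = derivWithin f J t * g t + f t * derivWithin g J t :=
  derivWithin_mul (hf.diff ht) (hg.diff ht)

lemma dw_sub (hf : Sm J f) (hg : Sm J g) (ht : t ∈ J) :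
    derivWithin (fun s => f s - g s) J t = derivWithin f J t - derivWithin g J t :=
  derivWithin_sub (hf.diff ht) (hg.diff ht)

lemma dw_add (hf : Sm J f) (hg : Sm J g) (ht : t ∈ J) :
    derivWithin (fun s => f s + g s) J t = derivWithin f J t + derivWithin g J t :=
  derivWithin_add (hf.diff ht) (hg.diff ht)

lemma dw_const_mul (c : ℂ) (hf : Sm J f) (ht : t ∈ J) :
    derivWithin (fun s => c * f s) J t = c * derivWithin f J t :=
  derivWithin_const_mul c (hf.diff ht)

lemma dw_sum {A : ℕ → ℝ → ℂ} {u : Finset ℕ} (h : ∀ i ∈ u, Sm J (A i)) (ht : t ∈ J) :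
    derivWithin (fun y => ∑ i ∈ u, A i y) J t = ∑ i ∈ u, derivWithin (A i) J t :=
  by have h' := derivWithin_sum (fun i hi => (h i hi).diff ht); rwa [Finset.sum_fn] at h'

omit hU in
lemma pascal_sum (n : ℕ) (X : ℕ → ℂ) :
    ∑ k ∈ range (n+2), ((n+1).choose k : ℂ) * X k
      = ∑ k ∈ range (n+1), (n.choose k : ℂ) * X k
        + ∑ k ∈ range (n+1), (n.choose k : ℂ) * X (k+1) := by
  rw [Finset.sum_range_succ' _ (n+1)]
  have h1 : ∀ k, ((n+1).choose (k+1) : ℂ) = (n.choose k : ℂ) + (n.choose (k+1) : ℂ) := by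
    intro k; exact_mod_cast congrArg (Nat.cast (R := ℂ)) (Nat.choose_succ_succ (n) (k))
  have : ∑ k ∈ range (n+1), ((n+1).choose (k+1) : ℂ) * X (k+1)
      = ∑ k ∈ range (n+1), (n.choose k : ℂ) * X (k+1)
        + ∑ k ∈ range (n+1), (n.choose (k+1) : ℂ) * X (k+1) := by
    rw [← Finset.sum_add_distrib]
    exact Finset.sum_congr rfl (fun k _ => by rw [h1 k]; ring
      )
  rw [this]
  have h3 := Finset.sum_range_succ' (fun k => (n.choose k : ℂ) * X k) (n+1)
  rw [Finset.sum_range_succ] at h3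
  simp only [Nat.choose_succ_self, Nat.cast_zero, zero_mul, add_zero] at h3
  rw [h3]
  simp only [Nat.choose_zero_right, Nat.cast_one]
  ring

end Infra

section PhiLayer

variable {J : Set ℝ} {ψ : ℝ → ℂ} {f g v : ℝ → ℂ} {t : ℝ}
variable (hU : UniqueDiffOn ℝ J) (hψ : Sm J ψ)
include hU hψ

lemma sm_phi (m r : ℕ) (hv : Sm J v) : Sm J (Phi J ψ m r v) := by
  induction r generalizing v with
  | zero => exact hv.it hU m
  | succ r IH =>
    show Sm J (fun t => Phi J ψ m r (fun s => ψ s * v s) t - ψ t * Phi J ψ m r v t)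
    exact (IH (hψ.mulp hv)).subp (hψ.mulp (IH hv))

lemma phi_step (m r : ℕ) :
    ∀ v, Sm J v → ∀ t ∈ J, Phi J ψ (m+1) (r+1) v t
      = derivWithin (Phi J ψ m (r+1) v) J t
        + ((r:ℂ)+1) * derivWithin ψ J t * Phi J ψ m r v t := by
  induction r with
  | zero =>
    intro v hv t ht
    show iteratedDerivWithin (m+1) (fun s => ψ s * v s) J t
        - ψ t * iteratedDerivWithin (m+1) v J t = _
    rw [it_succ hU (m) _ ht, it_succ hU m v ht]
    have h1 : derivWithin (Phi J ψ m 1 v) J t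
        = derivWithin (iteratedDerivWithin m (fun s => ψ s * v s) J) J t
          - (derivWithin ψ J t * iteratedDerivWithin m v J t
             + ψ t * derivWithin (iteratedDerivWithin m v J) J t) := by
      have : Phi J ψ m 1 v = fun s => iteratedDerivWithin m (fun s' => ψ s' * v s') J s
          - ψ s * iteratedDerivWithin m v J s := rfl
      rw [this, dw_sub hU ((hψ.mulp hv).it hU m) (hψ.mulp (hv.it hU m)) ht,
        dw_mul hU hψ (hv.it hU m) ht]
    rw [h1]
    have h4 : Phi J ψ m 0 v = iteratedDerivWithin m v J := rfl
    rw [h4]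
    push_cast
    ring
  | succ r IH =>
    intro v hv t ht
    show Phi J ψ (m+1) (r+1) (fun s => ψ s * v s) t - ψ t * Phi J ψ (m+1) (r+1) v t = _
    rw [IH (fun s => ψ s * v s) (hψ.mulp hv) t ht, IH v hv t ht]
    have h2 : derivWithin (Phi J ψ m (r+2) v) J t
        = derivWithin (Phi J ψ m (r+1) (fun s => ψ s * v s)) J t
          - (derivWithin ψ J t * Phi J ψ m (r+1) v t
             + ψ t * derivWithin (Phi J ψ m (r+1) v) J t) := by
      have : Phi J ψ m (r+2) v = fun s => Phi J ψ m (r+1) (fun s' => ψ s' * v s') s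
          - ψ s * Phi J ψ m (r+1) v s := rfl
      rw [this, dw_sub hU (sm_phi hU hψ m (r+1) (hψ.mulp hv)) (hψ.mul (sm_phi hU hψ m (r+1) hv)) ht,
        dw_mul hU hψ (sm_phi hU hψ m (r+1) hv) ht]
    rw [h2]
    have h3 : Phi J ψ m (r+1) v t
        = Phi J ψ m r (fun s => ψ s * v s) t - ψ t * Phi J ψ m r v t := rfl
    rw [h3]
    push_cast
    ring

lemma phi_van (m : ℕ) :
    ∀ r, m < r → ∀ v, Sm J v → ∀ t ∈ J, Phi J ψ m r v t = 0 := by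
  induction m with
  | zero =>
    intro r hr v hv t ht
    induction r generalizing v with
    | zero => omega
    | succ r IHr =>
      show Phi J ψ 0 r (fun s => ψ s * v s) t - ψ t * Phi J ψ 0 r v t = 0
      match r with
      | 0 =>
        show iteratedDerivWithin 0 (fun s => ψ s * v s) J t
            - ψ t * iteratedDerivWithin 0 v J t = 0
        simp [iteratedDerivWithin_zero]
      | (r'+1) =>
        rw [IHr (by omega) (fun s => ψ s * v s) (hψ.mulp hv), IHr (by omega) v hv]
        ring
  | succ m IHm =>
    intro r hr v hv t ht
    match r, hr with
    | (r'+1), hr =>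
      rw [phi_step hU hψ m r' v hv t ht]
      rw [IHm r' (by omega) v hv t ht]
      have hzero : Set.EqOn (Phi J ψ m (r'+1) v) (fun _ => (0:ℂ)) J :=
        fun x hx => IHm (r'+1) (by omega) v hv x hx
      rw [dw_congr hU hzero ht, show derivWithin (fun _ => (0:ℂ)) J t = 0 from congrFun (derivWithin_const J (0:ℂ)) t]
      ring

lemma phi_diag (m : ℕ) :
    ∀ v, Sm J v → ∀ t ∈ J, Phi J ψ m m v t
      = (m ! : ℂ) * (derivWithin ψ J t)^m * v t := by
  induction m with
  | zero =>
    intro v hv t ht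
    show iteratedDerivWithin 0 v J t = _
    simp [iteratedDerivWithin_zero]
  | succ m IH =>
    intro v hv t ht
    rw [phi_step hU hψ m m v hv t ht, IH v hv t ht]
    have hzero : Set.EqOn (Phi J ψ m (m+1) v) (fun _ => (0:ℂ)) J :=
      fun x hx => phi_van hU hψ m (m+1) (by omega) v hv x hx
    rw [dw_congr hU hzero ht, show derivWithin (fun _ => (0:ℂ)) J t = 0 from congrFun (derivWithin_const J (0:ℂ)) t]
    have : ((m+1)! : ℂ) = ((m:ℂ)+1) * (m ! : ℂ) := by
      rw [Nat.factorial_succ]; push_cast; ring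
    rw [this]
    ring

end PhiLayer

section LamLayer

variable {J : Set ℝ} {ψ : ℝ → ℂ} {u v : ℝ → ℂ} {t : ℝ}
variable (hU : UniqueDiffOn ℝ J) (hψ : Sm J ψ)
include hU hψ

omit hU hψ in
lemma Sm.sump {A : ℕ → ℝ → ℂ} {s : Finset ℕ} (h : ∀ i ∈ s, Sm J (A i)) :
    Sm J (fun y => ∑ i ∈ s, A i y) := ContDiffOn.sum h

lemma sm_lam (n m : ℕ) (hu : Sm J u) (hv : Sm J v) : Sm J (Lam J ψ n m u v) := by
  unfold Lam
  apply Sm.sump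
  intro k _
  exact (contDiffOn_const.mul ((Sm.mulp (hψ.pow k) hu).it hU k)).mul
    ((Sm.mulp (hψ.pow (n-k)) hv).it hU (n-k+m))

lemma sm_gam (n m : ℕ) : ∀ r u v, Sm J u → Sm J v → Sm J (Gam J ψ n m r u v) := by
  intro r
  induction r with
  | zero => intro u v hu hv; exact sm_lam hU hψ n m hu hv
  | succ r IH =>
    intro u v hu hv
    show Sm J (fun t => Gam J ψ n m r u (fun s => ψ s * v s) t
      - Gam J ψ n m r (fun s => ψ s * u s) v t)
    exact (IH u _ hu (hψ.mulp hv)).subp (IH _ v (hψ.mulp hu) hv)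

lemma lam_pascal (n m : ℕ) (hu : Sm J u) (hv : Sm J v) (ht : t ∈ J) :
    Lam J ψ (n+1) m u v t
      = Lam J ψ n (m+1) u (fun s => ψ s * v s) t
        + derivWithin (Lam J ψ n m (fun s => ψ s * u s) v) J t
        - Lam J ψ n (m+1) (fun s => ψ s * u s) v t := by
  have step : ∑ k ∈ range (n+2), ((n+1).choose k : ℂ) *
        (iteratedDerivWithin k (fun s => ψ s ^ k * u s) J t *
         iteratedDerivWithin (n+1-k+m) (fun s => ψ s ^ (n+1-k) * v s) J t)
      = ∑ k ∈ range (n+1), (n.choose k : ℂ) *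
          (iteratedDerivWithin k (fun s => ψ s ^ k * u s) J t *
           iteratedDerivWithin (n+1-k+m) (fun s => ψ s ^ (n+1-k) * v s) J t)
        + ∑ k ∈ range (n+1), (n.choose k : ℂ) *
          (iteratedDerivWithin (k+1) (fun s => ψ s ^ (k+1) * u s) J t *
           iteratedDerivWithin (n+1-(k+1)+m) (fun s => ψ s ^ (n+1-(k+1)) * v s) J t) :=
    pascal_sum n (fun k => iteratedDerivWithin k (fun s => ψ s ^ k * u s) J t *
      iteratedDerivWithin (n+1-k+m) (fun s => ψ s ^ (n+1-k) * v s) J t)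
  have hL : Lam J ψ (n+1) m u v t
      = ∑ k ∈ range (n+2), ((n+1).choose k : ℂ) *
        (iteratedDerivWithin k (fun s => ψ s ^ k * u s) J t *
         iteratedDerivWithin (n+1-k+m) (fun s => ψ s ^ (n+1-k) * v s) J t) := by
    unfold Lam
    exact Finset.sum_congr rfl (fun k _ => by ring)
  have h1 : ∑ k ∈ range (n+1), (n.choose k : ℂ) *
        (iteratedDerivWithin k (fun s => ψ s ^ k * u s) J t *
         iteratedDerivWithin (n+1-k+m) (fun s => ψ s ^ (n+1-k) * v s) J t)
      = Lam J ψ n (m+1) u (fun s => ψ s * v s) t := by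
    unfold Lam
    apply Finset.sum_congr rfl
    intro k hk
    have hkn : k ≤ n := by simpa [Nat.lt_succ_iff] using hk
    have e1 : n+1-k+m = n-k+(m+1) := by omega
    have e2 : (fun s => ψ s ^ (n+1-k) * v s) = (fun s => ψ s ^ (n-k) * (ψ s * v s)) := by
      funext s
      rw [show n+1-k = (n-k)+1 by omega, pow_succ]
      ring
    rw [e1, e2]
    ring
  have h3 : derivWithin (Lam J ψ n m (fun s => ψ s * u s) v) J t
      = ∑ k ∈ range (n+1), (n.choose k : ℂ) *
          (derivWithin (iteratedDerivWithin k (fun s => ψ s ^ k * (ψ s * u s)) J) J t *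
            iteratedDerivWithin (n-k+m) (fun s => ψ s ^ (n-k) * v s) J t
           + iteratedDerivWithin k (fun s => ψ s ^ k * (ψ s * u s)) J t *
             derivWithin (iteratedDerivWithin (n-k+m) (fun s => ψ s ^ (n-k) * v s) J) J t) := by
    have hrew : Lam J ψ n m (fun s => ψ s * u s) v
        = fun y => ∑ k ∈ range (n+1), ((n.choose k : ℂ) *
            (iteratedDerivWithin k (fun s => ψ s ^ k * (ψ s * u s)) J y *
             iteratedDerivWithin (n-k+m) (fun s => ψ s ^ (n-k) * v s) J y)) := by
      funext y; unfold Lam; exact Finset.sum_congr rfl (fun k _ => by ring)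
    rw [hrew, dw_sum hU (fun k _ => contDiffOn_const.mul
      (Sm.mulp ((Sm.mulp (hψ.pow k) (hψ.mulp hu)).it hU k)
        ((Sm.mulp (hψ.pow (n-k)) hv).it hU (n-k+m)))) ht]
    apply Finset.sum_congr rfl
    intro k _
    rw [dw_const_mul hU _ (Sm.mulp ((Sm.mulp (hψ.pow k) (hψ.mulp hu)).it hU k)
        ((Sm.mulp (hψ.pow (n-k)) hv).it hU (n-k+m))) ht,
      dw_mul hU ((Sm.mulp (hψ.pow k) (hψ.mulp hu)).it hU k)
        ((Sm.mulp (hψ.pow (n-k)) hv).it hU (n-k+m)) ht]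
  have h5 : Lam J ψ n (m+1) (fun s => ψ s * u s) v t
      = ∑ k ∈ range (n+1), (n.choose k : ℂ) *
          (iteratedDerivWithin k (fun s => ψ s ^ k * (ψ s * u s)) J t *
           iteratedDerivWithin (n-k+(m+1)) (fun s => ψ s ^ (n-k) * v s) J t) := by
    unfold Lam; exact Finset.sum_congr rfl (fun k _ => by ring)
  have key : derivWithin (Lam J ψ n m (fun s => ψ s * u s) v) J t
        - Lam J ψ n (m+1) (fun s => ψ s * u s) v t
      = ∑ k ∈ range (n+1), (n.choose k : ℂ) *
          (iteratedDerivWithin (k+1) (fun s => ψ s ^ (k+1) * u s) J t *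
           iteratedDerivWithin (n+1-(k+1)+m) (fun s => ψ s ^ (n+1-(k+1)) * v s) J t) := by
    rw [h3, h5, ← Finset.sum_sub_distrib]
    apply Finset.sum_congr rfl
    intro k hk
    have hkn : k ≤ n := by simpa [Nat.lt_succ_iff] using hk
    have e3 : (fun s => ψ s ^ (k+1) * u s) = (fun s => ψ s ^ k * (ψ s * u s)) := by
      funext s; rw [pow_succ]; ring
    have e4 : n+1-(k+1) = n-k := by omega
    have e5 : n+1-(k+1)+m = n-k+m := by omega
    have e6 : n-k+(m+1) = (n-k+m)+1 := by omega
    rw [e3, e4, it_succ hU k _ ht, e6, it_succ hU (n-k+m) _ ht]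
    ring
  rw [hL, step, h1]
  linear_combination -key

lemma gam_rec (n m : ℕ) : ∀ r u v, Sm J u → Sm J v → ∀ t ∈ J,
    Gam J ψ (n+1) m r u v t
      = Gam J ψ n (m+1) (r+1) u v t
        + derivWithin (Gam J ψ n m r (fun s => ψ s * u s) v) J t := by
  intro r
  induction r with
  | zero =>
    intro u v hu hv t ht
    have e1 : Gam J ψ (n+1) m 0 u v t = Lam J ψ (n+1) m u v t := rfl
    have e2 : Gam J ψ n (m+1) (0+1) u v t
        = Lam J ψ n (m+1) u (fun s => ψ s * v s) t
          - Lam J ψ n (m+1) (fun s => ψ s * u s) v t := rfl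
    have e3 : Gam J ψ n m 0 (fun s => ψ s * u s) v = Lam J ψ n m (fun s => ψ s * u s) v := rfl
    rw [e1, e2, e3, lam_pascal hU hψ n m hu hv ht]
    ring
  | succ r IH =>
    intro u v hu hv t ht
    have e1 : Gam J ψ (n+1) m (r+1) u v t
        = Gam J ψ (n+1) m r u (fun s => ψ s * v s) t
          - Gam J ψ (n+1) m r (fun s => ψ s * u s) v t := rfl
    rw [e1, IH u (fun s => ψ s * v s) hu (hψ.mulp hv) t ht,
      IH (fun s => ψ s * u s) v (hψ.mulp hu) hv t ht]
    have e2 : Gam J ψ n (m+1) (r+1+1) u v t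
        = Gam J ψ n (m+1) (r+1) u (fun s => ψ s * v s) t
          - Gam J ψ n (m+1) (r+1) (fun s => ψ s * u s) v t := rfl
    have e3 : derivWithin (Gam J ψ n m (r+1) (fun s => ψ s * u s) v) J t
        = derivWithin (Gam J ψ n m r (fun s => ψ s * u s) (fun s => ψ s * v s)) J t
          - derivWithin (Gam J ψ n m r (fun s => ψ s * (ψ s * u s)) v) J t := by
      have e4 : Gam J ψ n m (r+1) (fun s => ψ s * u s) v
          = fun y => Gam J ψ n m r (fun s => ψ s * u s) (fun s => ψ s * v s) y
            - Gam J ψ n m r (fun s => ψ s * (ψ s * u s)) v y := rfl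
      rw [e4, dw_sub hU (sm_gam hU hψ n m r _ _ (hψ.mulp hu) (hψ.mulp hv))
        (sm_gam hU hψ n m r _ v (hψ.mulp (hψ.mulp hu)) hv) ht]
    rw [e2, e3]
    ring

end LamLayer

section TeeLayer

variable {J : Set ℝ} {ψ : ℝ → ℂ} {u v w : ℝ → ℂ} {t : ℝ}
variable (hU : UniqueDiffOn ℝ J) (hψ : Sm J ψ)
include hU hψ

omit hU hψ in
lemma gam_zero (m : ℕ) : ∀ r u v (t : ℝ), Gam J ψ 0 m r u v t = u t * Phi J ψ m r v t := by
  intro r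
  induction r with
  | zero =>
    intro u v t
    show Lam J ψ 0 m u v t = u t * iteratedDerivWithin m v J t
    unfold Lam
    rw [Finset.sum_range_one]
    have e1 : (fun s => ψ s ^ (0:ℕ) * v s) = v := by funext s; simp
    have e2 : (fun s => ψ s ^ (0:ℕ) * u s) = u := by funext s; simp
    simp only [Nat.sub_zero, Nat.zero_sub, zero_add, e1, e2, iteratedDerivWithin_zero]
    simp
  | succ r IH =>
    intro u v t
    show Gam J ψ 0 m r u (fun s => ψ s * v s) t - Gam J ψ 0 m r (fun s => ψ s * u s) v t = _
    rw [IH u (fun s => ψ s * v s) t, IH (fun s => ψ s * u s) v t]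
    show _ = u t * (Phi J ψ m r (fun s => ψ s * v s) t - ψ t * Phi J ψ m r v t)
    ring

lemma sm_tee (n r : ℕ) (hw : Sm J w) : Sm J (Tee J ψ n r w) := by
  unfold Tee
  apply Sm.sump
  intro j _
  exact contDiffOn_const.mul
    ((Sm.mulp (Sm.mulp (hψ.pow j) ((hψ.dw hU).pow (n+r-j))) hw).it hU j)

lemma tee_rec (n r : ℕ) (hw : Sm J w) (ht : t ∈ J) :
    Tee J ψ (n+1) r w t
      = derivWithin (Tee J ψ n r (fun s => ψ s * w s)) J t
        + ((r:ℂ)+1) * Tee J ψ n (r+1) w t := by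
  have step : ∑ j ∈ range (n+2), ((n+1).choose j : ℂ) *
        (((n+1+r-j).descFactorial (n+1-j) : ℂ) *
          iteratedDerivWithin j (fun s => ψ s ^ j * (derivWithin ψ J s)^(n+1+r-j) * w s) J t)
      = ∑ j ∈ range (n+1), (n.choose j : ℂ) *
          (((n+1+r-j).descFactorial (n+1-j) : ℂ) *
            iteratedDerivWithin j (fun s => ψ s ^ j * (derivWithin ψ J s)^(n+1+r-j) * w s) J t)
        + ∑ j ∈ range (n+1), (n.choose j : ℂ) *
          (((n+1+r-(j+1)).descFactorial (n+1-(j+1)) : ℂ) *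
            iteratedDerivWithin (j+1)
              (fun s => ψ s ^ (j+1) * (derivWithin ψ J s)^(n+1+r-(j+1)) * w s) J t) :=
    pascal_sum n (fun j => ((n+1+r-j).descFactorial (n+1-j) : ℂ) *
      iteratedDerivWithin j (fun s => ψ s ^ j * (derivWithin ψ J s)^(n+1+r-j) * w s) J t)
  have hL : Tee J ψ (n+1) r w t
      = ∑ j ∈ range (n+2), ((n+1).choose j : ℂ) *
        (((n+1+r-j).descFactorial (n+1-j) : ℂ) *
          iteratedDerivWithin j (fun s => ψ s ^ j * (derivWithin ψ J s)^(n+1+r-j) * w s) J t) := by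
    unfold Tee
    exact Finset.sum_congr rfl (fun j _ => by push_cast; ring)
  have h1 : ∑ j ∈ range (n+1), (n.choose j : ℂ) *
        (((n+1+r-j).descFactorial (n+1-j) : ℂ) *
          iteratedDerivWithin j (fun s => ψ s ^ j * (derivWithin ψ J s)^(n+1+r-j) * w s) J t)
      = ((r:ℂ)+1) * Tee J ψ n (r+1) w t := by
    unfold Tee
    rw [Finset.mul_sum]
    apply Finset.sum_congr rfl
    intro j hj
    have hjn : j ≤ n := by simpa [Nat.lt_succ_iff] using hj
    have e1 : n+1+r-j = n+(r+1)-j := by omega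
    have e2 : (n+1+r-j).descFactorial (n+1-j) = (r+1) * (n+(r+1)-j).descFactorial (n-j) := by
      rw [show n+1-j = (n-j)+1 by omega, Nat.descFactorial_succ, e1]
      congr 1
      omega
    rw [e2, e1]
    push_cast
    ring
  have h2 : ∑ j ∈ range (n+1), (n.choose j : ℂ) *
        (((n+1+r-(j+1)).descFactorial (n+1-(j+1)) : ℂ) *
          iteratedDerivWithin (j+1)
            (fun s => ψ s ^ (j+1) * (derivWithin ψ J s)^(n+1+r-(j+1)) * w s) J t)
      = derivWithin (Tee J ψ n r (fun s => ψ s * w s)) J t := by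
    have hrew : Tee J ψ n r (fun s => ψ s * w s)
        = fun y => ∑ j ∈ range (n+1), ((n.choose j : ℂ) *
            (((n+r-j).descFactorial (n-j) : ℂ) *
              iteratedDerivWithin j
                (fun s => ψ s ^ j * (derivWithin ψ J s)^(n+r-j) * (ψ s * w s)) J y)) := by
      funext y; unfold Tee; exact Finset.sum_congr rfl (fun j _ => by push_cast; ring)
    rw [hrew, dw_sum hU (fun j _ => contDiffOn_const.mul (contDiffOn_const.mul
      ((Sm.mulp (Sm.mulp (hψ.pow j) ((hψ.dw hU).pow (n+r-j))) (hψ.mulp hw)).it hU j))) ht]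
    apply Finset.sum_congr rfl
    intro j hj
    have hjn : j ≤ n := by simpa [Nat.lt_succ_iff] using hj
    have e3 : n+1+r-(j+1) = n+r-j := by omega
    have e4 : n+1-(j+1) = n-j := by omega
    have e5 : (fun s => ψ s ^ (j+1) * (derivWithin ψ J s)^(n+r-j) * w s)
        = (fun s => ψ s ^ j * (derivWithin ψ J s)^(n+r-j) * (ψ s * w s)) := by
      funext s; rw [pow_succ]; ring
    rw [e3, e4, e5, it_succ hU j _ ht]
    rw [dw_const_mul hU _ (contDiffOn_const.mul
      ((Sm.mulp (Sm.mulp (hψ.pow j) ((hψ.dw hU).pow (n+r-j))) (hψ.mulp hw)).it hU j)) ht,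
      dw_const_mul hU _
        ((Sm.mulp (Sm.mulp (hψ.pow j) ((hψ.dw hU).pow (n+r-j))) (hψ.mulp hw)).it hU j) ht]
  rw [hL, step, h1, h2]
  ring

lemma gam_diag : ∀ n m u v, Sm J u → Sm J v → ∀ t ∈ J,
    Gam J ψ n m m u v t = (m ! : ℂ) * Tee J ψ n m (fun s => u s * v s) t := by
  intro n
  induction n with
  | zero =>
    intro m u v hu hv t ht
    rw [gam_zero m m u v t, phi_diag hU hψ m v hv t ht]
    unfold Tee
    rw [Finset.sum_range_one]
    have e1 : (fun s => ψ s ^ (0:ℕ) * (derivWithin ψ J s)^(0+m-0) * (u s * v s))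
        = (fun s => (derivWithin ψ J s)^m * (u s * v s)) := by
      funext s; simp
    rw [e1]
    simp only [iteratedDerivWithin_zero, Nat.choose_self, Nat.sub_zero, Nat.zero_sub,
      Nat.descFactorial_zero, Nat.zero_add]
    push_cast
    ring
  | succ n IH =>
    intro m u v hu hv t ht
    rw [gam_rec hU hψ n m m u v hu hv t ht, IH (m+1) u v hu hv t ht]
    have hEq : Set.EqOn (Gam J ψ n m m (fun s => ψ s * u s) v)
        (fun y => (m ! : ℂ) * Tee J ψ n m (fun s => ψ s * (u s * v s)) y) J := by
      intro y hy
      rw [IH m (fun s => ψ s * u s) v (hψ.mulp hu) hv y hy]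
      have e2 : (fun s => (fun s' => ψ s' * u s') s * v s)
          = (fun s => ψ s * (u s * v s)) := by
        funext s; ring
      rw [e2]
    rw [dw_congr hU hEq ht,
      dw_const_mul hU _ (sm_tee hU hψ n m (hψ.mulp (hu.mulp hv))) ht,
      tee_rec hU hψ n m (hu.mulp hv) ht]
    rw [Nat.factorial_succ]
    push_cast
    ring

end TeeLayer

section HStar

variable {J : Set ℝ} {ψ : ℝ → ℂ} {u v : ℝ → ℂ} {t : ℝ}
variable (hU : UniqueDiffOn ℝ J) (hψ : Sm J ψ)
include hU hψ

lemma lam_swap (n : ℕ) (hu : Sm J u) (hv : Sm J v) (ht : t ∈ J) :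
    Lam J ψ n 0 u (fun s => ψ s * v s) t = Lam J ψ n 0 (fun s => ψ s * u s) v t := by
  have h1 : Lam J ψ n 0 u (fun s => ψ s * v s) t
      = Gam J ψ n 0 0 u (fun s => ψ s * v s) t := rfl
  have h2 : Lam J ψ n 0 (fun s => ψ s * u s) v t
      = Gam J ψ n 0 0 (fun s => ψ s * u s) v t := rfl
  rw [h1, h2, gam_diag hU hψ n 0 u (fun s => ψ s * v s) hu (hψ.mulp hv) t ht,
    gam_diag hU hψ n 0 (fun s => ψ s * u s) v (hψ.mulp hu) hv t ht]
  have e : (fun s => u s * (ψ s * v s)) = (fun s => (fun s' => ψ s' * u s') s * v s) := by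
    funext s; ring
  rw [e]

lemma hstar (n : ℕ) : ∀ h g : ℝ → ℂ, Sm J h → Sm J g → ∀ t ∈ J,
    iteratedDerivWithin n (fun s => ψ s ^ n * h s * g s) J t
      = h t * iteratedDerivWithin n (fun s => ψ s ^ n * g s) J t
        + ∑ j ∈ range n, (n.choose (j+1) : ℂ) *
            (iteratedDerivWithin j (fun s => ψ s ^ (j+1) * derivWithin h J s) J t *
             iteratedDerivWithin (n-1-j) (fun s => ψ s ^ (n-1-j) * g s) J t) := by
  induction n with
  | zero =>
    intro h g hh hg t ht
    simp [iteratedDerivWithin_zero]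
  | succ n IH =>
    intro h g hh hg t ht
    have hdh : Sm J (derivWithin h J) := hh.dw hU
    have hψg : Sm J (fun s => ψ s * g s) := hψ.mulp hg
    have efun : (fun s => ψ s ^ (n+1) * h s * g s)
        = (fun s => ψ s ^ n * h s * (ψ s * g s)) := by
      funext s; rw [pow_succ]; ring
    rw [efun, it_succ hU n _ ht]
    have hIH : Set.EqOn (iteratedDerivWithin n (fun s => ψ s ^ n * h s * (ψ s * g s)) J)
        (fun y => h y * iteratedDerivWithin n (fun s => ψ s ^ n * (ψ s * g s)) J y
          + ∑ j ∈ range n, (n.choose (j+1) : ℂ) *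
              (iteratedDerivWithin j (fun s => ψ s ^ (j+1) * derivWithin h J s) J y *
               iteratedDerivWithin (n-1-j) (fun s => ψ s ^ (n-1-j) * (ψ s * g s)) J y)) J :=
    fun y hy => IH h (fun s => ψ s * g s) hh hψg y hy
    rw [dw_congr hU hIH ht]
    have smA : Sm J (iteratedDerivWithin n (fun s => ψ s ^ n * (ψ s * g s)) J) :=
      (Sm.mulp (hψ.pow n) hψg).it hU n
    have smB : ∀ j : ℕ, Sm J (iteratedDerivWithin j
        (fun s => ψ s ^ (j+1) * derivWithin h J s) J) :=
      fun j => (Sm.mulp (hψ.pow (j+1)) hdh).it hU j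
    have smC : ∀ j : ℕ, Sm J (iteratedDerivWithin (n-1-j)
        (fun s => ψ s ^ (n-1-j) * (ψ s * g s)) J) :=
      fun j => (Sm.mulp (hψ.pow (n-1-j)) hψg).it hU (n-1-j)
    rw [dw_add hU (hh.mulp smA)
      (Sm.sump (fun j _ => contDiffOn_const.mul (Sm.mulp (smB j) (smC j)))) ht,
      dw_mul hU hh smA ht,
      dw_sum hU (fun j _ => contDiffOn_const.mul (Sm.mulp (smB j) (smC j))) ht]
    have hDS : ∑ j ∈ range n, derivWithin (fun y => (n.choose (j+1) : ℂ) *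
          (iteratedDerivWithin j (fun s => ψ s ^ (j+1) * derivWithin h J s) J y *
           iteratedDerivWithin (n-1-j) (fun s => ψ s ^ (n-1-j) * (ψ s * g s)) J y)) J t
        = ∑ j ∈ range n, (n.choose (j+1) : ℂ) *
            (derivWithin (iteratedDerivWithin j
                (fun s => ψ s ^ (j+1) * derivWithin h J s) J) J t *
              iteratedDerivWithin (n-1-j) (fun s => ψ s ^ (n-1-j) * (ψ s * g s)) J t
             + iteratedDerivWithin j (fun s => ψ s ^ (j+1) * derivWithin h J s) J t *
               derivWithin (iteratedDerivWithin (n-1-j)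
                 (fun s => ψ s ^ (n-1-j) * (ψ s * g s)) J) J t) := by
      apply Finset.sum_congr rfl
      intro j _
      rw [dw_const_mul hU _ (Sm.mulp (smB j) (smC j)) ht, dw_mul hU (smB j) (smC j) ht]
    rw [hDS]
    -- (i) the A-derivative term
    have eA : (fun s => ψ s ^ n * (ψ s * g s)) = (fun s => ψ s ^ (n+1) * g s) := by
      funext s; rw [pow_succ]; ring
    have hAt : derivWithin (iteratedDerivWithin n (fun s => ψ s ^ n * (ψ s * g s)) J) J t
        = iteratedDerivWithin (n+1) (fun s => ψ s ^ (n+1) * g s) J t := by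
      rw [eA, ← it_succ hU n _ ht]
    -- (key1) : h' term plus B'-part equals the swapped Lam
    have key1 : derivWithin h J t *
          iteratedDerivWithin n (fun s => ψ s ^ n * (ψ s * g s)) J t
        + ∑ j ∈ range n, (n.choose (j+1) : ℂ) *
            (derivWithin (iteratedDerivWithin j
                (fun s => ψ s ^ (j+1) * derivWithin h J s) J) J t *
             iteratedDerivWithin (n-1-j) (fun s => ψ s ^ (n-1-j) * (ψ s * g s)) J t)
        = ∑ k ∈ range (n+1), (n.choose k : ℂ) *
            (iteratedDerivWithin k (fun s => ψ s ^ (k+1) * derivWithin h J s) J t *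
             iteratedDerivWithin (n-k) (fun s => ψ s ^ (n-k) * g s) J t) := by
      have peel : Lam J ψ n 0 (derivWithin h J) (fun s => ψ s * g s) t
          = (∑ i ∈ range n, ((n.choose (i+1) : ℂ) *
              iteratedDerivWithin (i+1) (fun s => ψ s ^ (i+1) * derivWithin h J s) J t *
              iteratedDerivWithin (n-(i+1)+0) (fun s => ψ s ^ (n-(i+1)) * (ψ s * g s)) J t))
            + (n.choose 0 : ℂ) *
              iteratedDerivWithin 0 (fun s => ψ s ^ (0:ℕ) * derivWithin h J s) J t *
              iteratedDerivWithin (n-0+0) (fun s => ψ s ^ (n-0) * (ψ s * g s)) J t :=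
        Finset.sum_range_succ' (fun k => (n.choose k : ℂ) *
          iteratedDerivWithin k (fun s => ψ s ^ k * derivWithin h J s) J t *
          iteratedDerivWithin (n-k+0) (fun s => ψ s ^ (n-k) * (ψ s * g s)) J t) n
      have ezero : (fun s => ψ s ^ (0:ℕ) * derivWithin h J s) = derivWithin h J := by
        funext s; simp
      have t0 : (n.choose 0 : ℂ) *
            iteratedDerivWithin 0 (fun s => ψ s ^ (0:ℕ) * derivWithin h J s) J t *
            iteratedDerivWithin (n-0+0) (fun s => ψ s ^ (n-0) * (ψ s * g s)) J t
          = derivWithin h J t *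
              iteratedDerivWithin n (fun s => ψ s ^ n * (ψ s * g s)) J t := by
        rw [ezero]
        simp only [iteratedDerivWithin_zero, Nat.sub_zero, Nat.add_zero,
          Nat.choose_zero_right, Nat.cast_one]
        ring
      have ts : ∑ i ∈ range n, ((n.choose (i+1) : ℂ) *
            iteratedDerivWithin (i+1) (fun s => ψ s ^ (i+1) * derivWithin h J s) J t *
            iteratedDerivWithin (n-(i+1)+0) (fun s => ψ s ^ (n-(i+1)) * (ψ s * g s)) J t)
          = ∑ j ∈ range n, (n.choose (j+1) : ℂ) *
              (derivWithin (iteratedDerivWithin j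
                  (fun s => ψ s ^ (j+1) * derivWithin h J s) J) J t *
               iteratedDerivWithin (n-1-j) (fun s => ψ s ^ (n-1-j) * (ψ s * g s)) J t) := by
        apply Finset.sum_congr rfl
        intro j hj
        have hjn : j < n := by simpa using hj
        have e1 : n-(j+1)+0 = n-1-j := by omega
        have e2 : n-(j+1) = n-1-j := by omega
        rw [e1, e2, it_succ hU j _ ht]
        ring
      have l2 : Lam J ψ n 0 (fun s => ψ s * derivWithin h J s) g t
          = ∑ k ∈ range (n+1), (n.choose k : ℂ) *
              (iteratedDerivWithin k (fun s => ψ s ^ (k+1) * derivWithin h J s) J t *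
               iteratedDerivWithin (n-k) (fun s => ψ s ^ (n-k) * g s) J t) := by
        unfold Lam
        apply Finset.sum_congr rfl
        intro k _
        have e3 : (fun s => ψ s ^ k * (fun s' => ψ s' * derivWithin h J s') s)
            = (fun s => ψ s ^ (k+1) * derivWithin h J s) := by
          funext s; rw [pow_succ]; ring
        have e4 : n-k+0 = n-k := by omega
        rw [e3, e4]
        ring
      rw [← t0, ← ts, add_comm, ← peel, lam_swap hU hψ n hdh hg ht, l2]
    -- split the combined derivative sum
    have splitS : ∑ j ∈ range n, (n.choose (j+1) : ℂ) *
          (derivWithin (iteratedDerivWithin j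
              (fun s => ψ s ^ (j+1) * derivWithin h J s) J) J t *
            iteratedDerivWithin (n-1-j) (fun s => ψ s ^ (n-1-j) * (ψ s * g s)) J t
           + iteratedDerivWithin j (fun s => ψ s ^ (j+1) * derivWithin h J s) J t *
             derivWithin (iteratedDerivWithin (n-1-j)
               (fun s => ψ s ^ (n-1-j) * (ψ s * g s)) J) J t)
        = ∑ j ∈ range n, (n.choose (j+1) : ℂ) *
            (derivWithin (iteratedDerivWithin j
                (fun s => ψ s ^ (j+1) * derivWithin h J s) J) J t *
             iteratedDerivWithin (n-1-j) (fun s => ψ s ^ (n-1-j) * (ψ s * g s)) J t)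
          + ∑ j ∈ range n, (n.choose (j+1) : ℂ) *
              (iteratedDerivWithin j (fun s => ψ s ^ (j+1) * derivWithin h J s) J t *
               derivWithin (iteratedDerivWithin (n-1-j)
                 (fun s => ψ s ^ (n-1-j) * (ψ s * g s)) J) J t) := by
      rw [← Finset.sum_add_distrib]
      exact Finset.sum_congr rfl (fun j _ => by ring)
    -- (iii) rewrite the C-derivative part
    have hCd : ∑ j ∈ range n, (n.choose (j+1) : ℂ) *
          (iteratedDerivWithin j (fun s => ψ s ^ (j+1) * derivWithin h J s) J t *
           derivWithin (iteratedDerivWithin (n-1-j)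
             (fun s => ψ s ^ (n-1-j) * (ψ s * g s)) J) J t)
        = ∑ j ∈ range n, (n.choose (j+1) : ℂ) *
            (iteratedDerivWithin j (fun s => ψ s ^ (j+1) * derivWithin h J s) J t *
             iteratedDerivWithin (n-j) (fun s => ψ s ^ (n-j) * g s) J t) := by
      apply Finset.sum_congr rfl
      intro j hj
      have hjn : j < n := by simpa using hj
      have e4 : (fun s => ψ s ^ (n-1-j) * (ψ s * g s))
          = (fun s => ψ s ^ (n-j) * g s) := by
        funext s; rw [show n-j = (n-1-j)+1 by omega, pow_succ]; ring
      have e5 : n-j = (n-1-j)+1 := by omega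
      rw [e4, e5, it_succ hU (n-1-j) _ ht]
    -- final Pascal step on the target sum
    have target : ∑ j ∈ range (n+1), ((n+1).choose (j+1) : ℂ) *
          (iteratedDerivWithin j (fun s => ψ s ^ (j+1) * derivWithin h J s) J t *
           iteratedDerivWithin (n+1-1-j) (fun s => ψ s ^ (n+1-1-j) * g s) J t)
        = ∑ k ∈ range (n+1), (n.choose k : ℂ) *
            (iteratedDerivWithin k (fun s => ψ s ^ (k+1) * derivWithin h J s) J t *
             iteratedDerivWithin (n-k) (fun s => ψ s ^ (n-k) * g s) J t)
          + ∑ j ∈ range n, (n.choose (j+1) : ℂ) *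
              (iteratedDerivWithin j (fun s => ψ s ^ (j+1) * derivWithin h J s) J t *
               iteratedDerivWithin (n-j) (fun s => ψ s ^ (n-j) * g s) J t) := by
      have split : ∀ j ∈ range (n+1), ((n+1).choose (j+1) : ℂ) *
            (iteratedDerivWithin j (fun s => ψ s ^ (j+1) * derivWithin h J s) J t *
             iteratedDerivWithin (n+1-1-j) (fun s => ψ s ^ (n+1-1-j) * g s) J t)
          = (n.choose j : ℂ) *
              (iteratedDerivWithin j (fun s => ψ s ^ (j+1) * derivWithin h J s) J t *
               iteratedDerivWithin (n-j) (fun s => ψ s ^ (n-j) * g s) J t)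
            + (n.choose (j+1) : ℂ) *
              (iteratedDerivWithin j (fun s => ψ s ^ (j+1) * derivWithin h J s) J t *
               iteratedDerivWithin (n-j) (fun s => ψ s ^ (n-j) * g s) J t) := by
        intro j _
        have e6 : n+1-1-j = n-j := by omega
        rw [e6]
        have : ((n+1).choose (j+1) : ℂ) = (n.choose j : ℂ) + (n.choose (j+1) : ℂ) := by
          exact_mod_cast congrArg (Nat.cast (R := ℂ)) (Nat.choose_succ_succ n j)
        rw [this]
        ring
      rw [Finset.sum_congr rfl split, Finset.sum_add_distrib]
      congr 1
      rw [Finset.sum_range_succ]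
      simp [Nat.choose_succ_self]
    rw [hAt, splitS, hCd, target]
    linear_combination key1
  
end HStar

section Assemble

variable {J : Set ℝ} {ψ : ℝ → ℂ} {f : ℝ → ℂ} {t : ℝ}
variable (hU : UniqueDiffOn ℝ J) (hψ : Sm J ψ)
include hU hψ

omit hψ in
lemma it_const_mul (k : ℕ) (c : ℂ) (hf : Sm J f) (ht : t ∈ J) :
    iteratedDerivWithin k (fun s => c * f s) J t = c * iteratedDerivWithin k f J t := by
  have h := iteratedDerivWithin_const_smul (𝕜 := ℝ) (F := ℂ) (R := ℂ) (f := f) (s := J)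
    (n := k) (hx := ht) (h := hU) (c := c) (hf := (hf t ht).of_le (by exact_mod_cast (le_top : (k:ℕ∞) ≤ ⊤)))
  simpa [smul_eq_mul] using h

omit hψ in
lemma it_add_iter (q : ℕ) : ∀ (n : ℕ) (f : ℝ → ℂ), ∀ t ∈ J,
    iteratedDerivWithin q (iteratedDerivWithin n f J) J t
      = iteratedDerivWithin (n+q) f J t := by
  induction q with
  | zero => intro n f t ht; simp [iteratedDerivWithin_zero]
  | succ q IH =>
    intro n f t ht
    rw [it_succ' hU q _ ht]
    have hEq : Set.EqOn (derivWithin (iteratedDerivWithin n f J) J)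
        (iteratedDerivWithin (n+1) f J) J := fun x hx => (it_succ hU n f hx).symm
    rw [it_congr hU q hEq ht, IH (n+1) f t ht, show n+1+q = n+(q+1) by omega]

lemma dw_pow (m : ℕ) (ht : t ∈ J) :
    derivWithin (fun s => ψ s ^ m) J t = (m : ℂ) * ψ t ^ (m-1) * derivWithin ψ J t := by
  induction m with
  | zero =>
    simp only [pow_zero, Nat.cast_zero, zero_mul]
    exact congrFun (derivWithin_const J (1:ℂ)) t
  | succ m IH =>
    have e : (fun s => ψ s ^ (m+1)) = (fun s => ψ s ^ m * ψ s) := by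
      funext s; rw [pow_succ]
    rw [e, dw_mul hU (hψ.pow m) hψ ht, IH]
    match m with
    | 0 => norm_num
    | (m'+1) =>
      rw [show m'+1+1-1 = m'+1 from rfl, show m'+1-1 = m' from rfl]
      have e2 : ψ t ^ m' * ψ t = ψ t ^ (m'+1) := (pow_succ _ _).symm
      push_cast
      linear_combination ((m':ℂ)+1) * derivWithin ψ J t * e2

lemma cf (p : ℕ) (hp : 1 ≤ p) : ∀ m, ∀ t ∈ J,
    ((m+p : ℕ) : ℂ) * FS J ψ m (p:ℤ) t
      = (p:ℂ) * iteratedDerivWithin m (fun s => ψ s ^ (m+p)) J t := by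
  have ezp : (fun y : ℝ => ψ y ^ (p:ℤ)) = (fun y => ψ y ^ p) := by
    funext y; exact zpow_natCast _ p
  intro m
  match m with
  | 0 =>
    intro t ht
    show ((0+p:ℕ):ℂ) * ψ t ^ (p:ℤ) = _
    rw [iteratedDerivWithin_zero, zpow_natCast]
    norm_num
  | (m+1) =>
    intro t ht
    have hFS : FS J ψ (m+1) (p:ℤ)
        = iteratedDerivWithin m
            (fun s => ψ s ^ (m+1) * derivWithin (fun y => ψ y ^ p) J s) J := by
      show iteratedDerivWithin m (ψ ^ (m+1) * derivWithin (fun y => ψ y ^ (p:ℤ)) J) J = _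
      rw [ezp]
      rfl
    have smdw : Sm J (derivWithin (fun y => ψ y ^ p) J) := Sm.dw (hU := hU) (hf := hψ.pow p)
    have smG : Sm J (fun s => ψ s ^ (m+1) * derivWithin (fun y => ψ y ^ p) J s) :=
      Sm.mulp (hψ.pow (m+1)) smdw
    have hEq : Set.EqOn
        (fun s => ((m+1+p:ℕ):ℂ) * (ψ s ^ (m+1) * derivWithin (fun y => ψ y ^ p) J s))
        (fun s => (p:ℂ) * derivWithin (fun y => ψ y ^ (m+1+p)) J s) J := by
      intro s hs
      show ((m+1+p:ℕ):ℂ) * (ψ s ^ (m+1) * derivWithin (fun y => ψ y ^ p) J s)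
        = (p:ℂ) * derivWithin (fun y => ψ y ^ (m+1+p)) J s
      rw [dw_pow hU hψ p hs, dw_pow hU hψ (m+1+p) hs]
      have e : ψ s ^ (m+1) * ψ s ^ (p-1) = ψ s ^ (m+1+p-1) := by
        rw [← pow_add]; congr 1; omega
      push_cast [show ((m+1+p:ℕ):ℂ) = ((m:ℂ)+1+(p:ℂ)) by push_cast; ring]
      linear_combination ((m:ℂ)+1+(p:ℂ)) * (p:ℂ) * derivWithin ψ J s * e
    calc ((m+1+p : ℕ) : ℂ) * FS J ψ (m+1) (p:ℤ) t
        = iteratedDerivWithin m (fun s => ((m+1+p:ℕ):ℂ) *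
            (ψ s ^ (m+1) * derivWithin (fun y => ψ y ^ p) J s)) J t := by
          rw [hFS]; exact (it_const_mul hU m _ smG ht).symm
      _ = iteratedDerivWithin m (fun s => (p:ℂ) *
            derivWithin (fun y => ψ y ^ (m+1+p)) J s) J t := it_congr hU m hEq ht
      _ = (p:ℂ) * iteratedDerivWithin m
            (derivWithin (fun y => ψ y ^ (m+1+p)) J) J t :=
          it_const_mul hU m _ (Sm.dw (hU := hU) (hf := hψ.pow (m+1+p))) ht
      _ = (p:ℂ) * iteratedDerivWithin (m+1) (fun s => ψ s ^ (m+1+p)) J t := by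
          rw [← it_succ' hU m _ ht]

end Assemble

section Final

variable {J : Set ℝ} {ψ : ℝ → ℂ} {t : ℝ}
variable (hU : UniqueDiffOn ℝ J) (hψ : Sm J ψ)
include hU hψ

lemma key1 (p : ℕ) (hp : 1 ≤ p) (n : ℕ) : ∀ x ∈ J,
    iteratedDerivWithin n (fun s => ψ s ^ (n+2*p)) J x
      = ∑ k ∈ range (n+1), (n.choose k : ℂ) *
          (FS J ψ k (p:ℤ) x *
           iteratedDerivWithin (n-k) (fun s => ψ s ^ (n-k+p)) J x) := by
  intro x hx
  have ezp : (fun y : ℝ => ψ y ^ (p:ℤ)) = (fun y => ψ y ^ p) :=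
    funext fun y => zpow_natCast _ p
  have eFS : ∀ j : ℕ, FS J ψ (j+1) (p:ℤ)
      = iteratedDerivWithin j
          (fun s => ψ s ^ (j+1) * derivWithin (fun s' => ψ s' ^ p) J s) J := by
    intro j
    show iteratedDerivWithin j (ψ ^ (j+1) * derivWithin (fun y => ψ y ^ (p:ℤ)) J) J = _
    rw [ezp]
    rfl
  have H : iteratedDerivWithin n (fun s => ψ s ^ n * ψ s ^ p * ψ s ^ p) J x
      = ψ x ^ p * iteratedDerivWithin n (fun s => ψ s ^ n * ψ s ^ p) J x
        + ∑ j ∈ range n, (n.choose (j+1) : ℂ) *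
            (iteratedDerivWithin j
                (fun s => ψ s ^ (j+1) * derivWithin (fun s' => ψ s' ^ p) J s) J x *
             iteratedDerivWithin (n-1-j) (fun s => ψ s ^ (n-1-j) * ψ s ^ p) J x) :=
    hstar hU hψ n (fun s => ψ s ^ p) (fun s => ψ s ^ p) (hψ.pow p) (hψ.pow p) x hx
  have e1 : (fun s => ψ s ^ n * ψ s ^ p * ψ s ^ p) = (fun s => ψ s ^ (n+2*p)) := by
    funext s; rw [← pow_add, ← pow_add, show n+p+p = n+2*p by omega]
  have e2 : (fun s => ψ s ^ n * ψ s ^ p) = (fun s => ψ s ^ (n+p)) := by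
    funext s; rw [← pow_add]
  rw [e1, e2] at H
  have hsum1 : ∑ j ∈ range n, (n.choose (j+1) : ℂ) *
        (iteratedDerivWithin j
            (fun s => ψ s ^ (j+1) * derivWithin (fun s' => ψ s' ^ p) J s) J x *
         iteratedDerivWithin (n-1-j) (fun s => ψ s ^ (n-1-j) * ψ s ^ p) J x)
      = ∑ j ∈ range n, (n.choose (j+1) : ℂ) *
          (FS J ψ (j+1) (p:ℤ) x *
           iteratedDerivWithin (n-1-j) (fun s => ψ s ^ (n-1-j+p)) J x) := by
    apply Finset.sum_congr rfl
    intro j _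
    rw [← eFS j]
    have e3 : (fun s => ψ s ^ (n-1-j) * ψ s ^ p) = (fun s => ψ s ^ (n-1-j+p)) := by
      funext s; rw [← pow_add]
    rw [e3]
  rw [hsum1] at H
  have peel : ∑ k ∈ range (n+1), (n.choose k : ℂ) *
        (FS J ψ k (p:ℤ) x *
         iteratedDerivWithin (n-k) (fun s => ψ s ^ (n-k+p)) J x)
      = (∑ i ∈ range n, (n.choose (i+1) : ℂ) *
          (FS J ψ (i+1) (p:ℤ) x *
           iteratedDerivWithin (n-(i+1)) (fun s => ψ s ^ (n-(i+1)+p)) J x))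
        + (n.choose 0 : ℂ) *
          (FS J ψ 0 (p:ℤ) x *
           iteratedDerivWithin (n-0) (fun s => ψ s ^ (n-0+p)) J x) :=
    Finset.sum_range_succ' (fun k => (n.choose k : ℂ) *
      (FS J ψ k (p:ℤ) x *
       iteratedDerivWithin (n-k) (fun s => ψ s ^ (n-k+p)) J x)) n
  have epeel : ∑ i ∈ range n, (n.choose (i+1) : ℂ) *
        (FS J ψ (i+1) (p:ℤ) x *
         iteratedDerivWithin (n-(i+1)) (fun s => ψ s ^ (n-(i+1)+p)) J x)
      = ∑ j ∈ range n, (n.choose (j+1) : ℂ) *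
          (FS J ψ (j+1) (p:ℤ) x *
           iteratedDerivWithin (n-1-j) (fun s => ψ s ^ (n-1-j+p)) J x) := by
    apply Finset.sum_congr rfl
    intro j _
    rw [show n-(j+1) = n-1-j by omega]
  have ezero : (n.choose 0 : ℂ) *
        (FS J ψ 0 (p:ℤ) x *
         iteratedDerivWithin (n-0) (fun s => ψ s ^ (n-0+p)) J x)
      = ψ x ^ p * iteratedDerivWithin n (fun s => ψ s ^ (n+p)) J x := by
    show (n.choose 0 : ℂ) * (ψ x ^ (p:ℤ) * _) = _
    rw [zpow_natCast, Nat.choose_zero_right, Nat.sub_zero]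
    push_cast
    ring
  rw [peel, epeel, ezero, H]
  ring

lemma main2 (p : ℕ) (hp : 1 ≤ p) (n : ℕ) : ∀ x ∈ J,
    ∑ k ∈ range (n+1), (n.choose k : ℂ) * FS J ψ k (p:ℤ) x * FS J ψ (n-k) (p:ℤ) x
      = 2*(p:ℂ)*((n+2*p:ℕ):ℂ)⁻¹ *
        iteratedDerivWithin n (fun s => ψ s ^ (n+2*p)) J x := by
  intro x hx
  have hnz : ∀ k : ℕ, ((k+p:ℕ):ℂ) ≠ 0 := fun k => Nat.cast_ne_zero.mpr (by omega)
  have hnz2 : ((n+2*p:ℕ):ℂ) ≠ 0 := Nat.cast_ne_zero.mpr (by omega)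
  have cfa : ∀ k : ℕ, FS J ψ k (p:ℤ) x
      = (p:ℂ) * ((k+p:ℕ):ℂ)⁻¹ * iteratedDerivWithin k (fun s => ψ s ^ (k+p)) J x := by
    intro k
    have h := cf hU hψ p hp k x hx
    have h1 : ((k:ℂ)+(p:ℂ)) ≠ 0 := by exact_mod_cast hnz k
    rw [show ((k+p:ℕ):ℂ) = (k:ℂ)+(p:ℂ) by push_cast; ring] at h
    rw [show ((k+p:ℕ):ℂ) = (k:ℂ)+(p:ℂ) by push_cast; ring]
    field_simp
    linear_combination h
  -- the reflected sum identity
  have R : ∑ j ∈ range (n+1), ((n.choose (n+1-1-j) : ℂ) *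
        (((n+1-1-j+p:ℕ):ℂ)⁻¹ *
          (iteratedDerivWithin (n+1-1-j) (fun s => ψ s ^ (n+1-1-j+p)) J x *
           iteratedDerivWithin (n-(n+1-1-j)) (fun s => ψ s ^ (n-(n+1-1-j)+p)) J x)))
      = ∑ j ∈ range (n+1), ((n.choose j : ℂ) *
          (((j+p:ℕ):ℂ)⁻¹ *
            (iteratedDerivWithin j (fun s => ψ s ^ (j+p)) J x *
             iteratedDerivWithin (n-j) (fun s => ψ s ^ (n-j+p)) J x))) :=
    Finset.sum_range_reflect (fun k => (n.choose k : ℂ) *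
      (((k+p:ℕ):ℂ)⁻¹ *
        (iteratedDerivWithin k (fun s => ψ s ^ (k+p)) J x *
         iteratedDerivWithin (n-k) (fun s => ψ s ^ (n-k+p)) J x))) (n+1)
  have R' : ∑ j ∈ range (n+1), ((n.choose j : ℂ) *
        (((n-j+p:ℕ):ℂ)⁻¹ *
          (iteratedDerivWithin j (fun s => ψ s ^ (j+p)) J x *
           iteratedDerivWithin (n-j) (fun s => ψ s ^ (n-j+p)) J x)))
      = ∑ j ∈ range (n+1), ((n.choose j : ℂ) *
          (((j+p:ℕ):ℂ)⁻¹ *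
            (iteratedDerivWithin j (fun s => ψ s ^ (j+p)) J x *
             iteratedDerivWithin (n-j) (fun s => ψ s ^ (n-j+p)) J x))) := by
    rw [← R]
    apply Finset.sum_congr rfl
    intro j hj
    have hjn : j ≤ n := by simpa [Nat.lt_succ_iff] using hj
    rw [show n+1-1-j = n-j by omega, show n-(n-j) = j by omega,
      Nat.choose_symm hjn]
    ring
  -- rewrite every FS via the closed form, and split via partial fractions
  have split : ∀ k ∈ range (n+1), (n.choose k : ℂ) * FS J ψ k (p:ℤ) x * FS J ψ (n-k) (p:ℤ) x
      = 2*(p:ℂ)*((n+2*p:ℕ):ℂ)⁻¹ * ((p:ℂ)/2 * ((n.choose k : ℂ) *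
          (((k+p:ℕ):ℂ)⁻¹ *
            (iteratedDerivWithin k (fun s => ψ s ^ (k+p)) J x *
             iteratedDerivWithin (n-k) (fun s => ψ s ^ (n-k+p)) J x)))
        + (p:ℂ)/2 * ((n.choose k : ℂ) *
          (((n-k+p:ℕ):ℂ)⁻¹ *
            (iteratedDerivWithin k (fun s => ψ s ^ (k+p)) J x *
             iteratedDerivWithin (n-k) (fun s => ψ s ^ (n-k+p)) J x)))) := by
    intro k hk
    have hkn : k ≤ n := by simpa [Nat.lt_succ_iff] using hk
    rw [cfa k, cfa (n-k)]
    have ecast : ((n-k+p:ℕ):ℂ) = (n:ℂ) - (k:ℂ) + (p:ℂ) := by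
      push_cast [Nat.cast_sub hkn]; ring
    have ecast2 : ((k+p:ℕ):ℂ) = (k:ℂ) + (p:ℂ) := by push_cast; ring
    have ecast3 : ((n+2*p:ℕ):ℂ) = (n:ℂ) + 2*(p:ℂ) := by push_cast; ring
    rw [ecast, ecast2, ecast3]
    have h1 : (k:ℂ) + (p:ℂ) ≠ 0 := by rw [← ecast2]; exact hnz k
    have h2 : (n:ℂ) - (k:ℂ) + (p:ℂ) ≠ 0 := by rw [← ecast]; exact hnz (n-k)
    have h3 : (n:ℂ) + 2*(p:ℂ) ≠ 0 := by rw [← ecast3]; exact hnz2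
    have h3' : (p:ℂ) * 2 + (n:ℂ) ≠ 0 := by rw [mul_comm, add_comm]; exact h3
    generalize iteratedDerivWithin k (fun s => ψ s ^ (k+p)) J x = A
    generalize iteratedDerivWithin (n-k) (fun s => ψ s ^ (n-k+p)) J x = B
    field_simp
    linear_combination (-((n.choose k : ℂ) * (p:ℂ) ^ 2 * A * B)) * mul_inv_cancel₀ h3'
  rw [Finset.sum_congr rfl split, ← Finset.mul_sum]
  have combine : ∑ k ∈ range (n+1), ((p:ℂ)/2 * ((n.choose k : ℂ) *
        (((k+p:ℕ):ℂ)⁻¹ *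
          (iteratedDerivWithin k (fun s => ψ s ^ (k+p)) J x *
           iteratedDerivWithin (n-k) (fun s => ψ s ^ (n-k+p)) J x)))
      + (p:ℂ)/2 * ((n.choose k : ℂ) *
        (((n-k+p:ℕ):ℂ)⁻¹ *
          (iteratedDerivWithin k (fun s => ψ s ^ (k+p)) J x *
           iteratedDerivWithin (n-k) (fun s => ψ s ^ (n-k+p)) J x))))
      = iteratedDerivWithin n (fun s => ψ s ^ (n+2*p)) J x := by
    rw [Finset.sum_add_distrib, ← Finset.mul_sum, ← Finset.mul_sum, R']
    have eS : ∑ k ∈ range (n+1), ((n.choose k : ℂ) *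
          (((k+p:ℕ):ℂ)⁻¹ *
            (iteratedDerivWithin k (fun s => ψ s ^ (k+p)) J x *
             iteratedDerivWithin (n-k) (fun s => ψ s ^ (n-k+p)) J x)))
        = ((p:ℂ))⁻¹ * ∑ k ∈ range (n+1), (n.choose k : ℂ) *
            (FS J ψ k (p:ℤ) x *
             iteratedDerivWithin (n-k) (fun s => ψ s ^ (n-k+p)) J x) := by
      rw [Finset.mul_sum]
      apply Finset.sum_congr rfl
      intro k _
      rw [cfa k]
      have hpne : (p:ℂ) ≠ 0 := Nat.cast_ne_zero.mpr (by omega)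
      linear_combination (-((n.choose k : ℂ) * (((k+p:ℕ):ℂ))⁻¹ *
        (iteratedDerivWithin k (fun s => ψ s ^ (k+p)) J x *
         iteratedDerivWithin (n-k) (fun s => ψ s ^ (n-k+p)) J x))) * (mul_inv_cancel₀ hpne)
    rw [eS, ← key1 hU hψ p hp n x hx]
    have hpne : (p:ℂ) ≠ 0 := Nat.cast_ne_zero.mpr (by omega)
    linear_combination (iteratedDerivWithin n (fun s => ψ s ^ (n+2*p)) J x) *
      (mul_inv_cancel₀ hpne)
  rw [combine]

end Final

end Stmt14Aux

theorem stmt14 (a b : ℝ) (hab : a < b) (J : Set ℝ) (hJ : J = Set.Icc a b)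
    (ψ : ℝ → ℂ) (hψ : ContDiffOn ℝ (⊤ : ℕ∞) ψ J) (hψ0 : ∀ t ∈ J, ψ t ≠ 0)
    (n p : ℕ) (hn : 1 ≤ n) (hp : 1 ≤ p) :
    ∀ t ∈ J,
      2 * FS J ψ (n + p) (p : ℤ) t =
        iteratedDerivWithin p
          (fun s => ∑ k ∈ Finset.range (n + 1), (n.choose k : ℂ) *
            FS J ψ k (p : ℤ) s * FS J ψ (n - k) (p : ℤ) s) J t := by
  subst hJ
  intro t ht
  have hU : UniqueDiffOn ℝ (Set.Icc a b) := uniqueDiffOn_Icc hab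
  have hS : Stmt14Aux.Sm (Set.Icc a b) ψ := hψ.of_le (by simp)
  have hnz2 : ((n+2*p:ℕ):ℂ) ≠ 0 := Nat.cast_ne_zero.mpr (by omega)
  have hW : Set.EqOn (fun s => ∑ k ∈ Finset.range (n + 1), (n.choose k : ℂ) *
        FS (Set.Icc a b) ψ k (p : ℤ) s * FS (Set.Icc a b) ψ (n - k) (p : ℤ) s)
      (fun s => 2*(p:ℂ)*((n+2*p:ℕ):ℂ)⁻¹ *
        iteratedDerivWithin n (fun y => ψ y ^ (n+2*p)) (Set.Icc a b) s) (Set.Icc a b) :=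
    fun x hx => Stmt14Aux.main2 hU hS p hp n x hx
  rw [Stmt14Aux.it_congr hU p hW ht]
  have smIt : Stmt14Aux.Sm (Set.Icc a b)
      (iteratedDerivWithin n (fun y => ψ y ^ (n+2*p)) (Set.Icc a b)) :=
    Stmt14Aux.Sm.it (hU := hU) (hf := hS.pow (n+2*p)) n
  rw [Stmt14Aux.it_const_mul hU p _ smIt ht]
  rw [Stmt14Aux.it_add_iter hU p n (fun y => ψ y ^ (n+2*p)) t ht]
  have hcf := Stmt14Aux.cf hU hS p hp (n+p) t ht
  rw [show n+p+p = n+2*p by omega] at hcf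
  linear_combination 2*((n+2*p:ℕ):ℂ)⁻¹ * hcf
    - 2*(FS (Set.Icc a b) ψ (n+p) (p:ℤ) t) * (mul_inv_cancel₀ hnz2)
end

section
/- (Product estimate for analytic norms.) Let J be a segment and R > 0. For functions g : J → ℂ define N_R(g) = sup_{p∈ℕ} ‖D^p g‖_J / (p!·R^p). Then for every integer p ≥ 1 and all real-analytic functions g_1, …, g_p on J with N_R(g_j) < ∞ for each j, one has N_{2R}(g_1 ⋯ g_p) ≤ 2^{p-1} · N_R(g_1) ⋯ N_R(g_p). -/
/-! By Leibniz's rule, `N_{2R}(f h) ≤ 2 N_R(f) N_{2R}(h)`: with the bounds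
`‖D^k f‖ ≤ N_R(f) k! R^k` and `‖D^j h‖ ≤ N_{2R}(h) j! (2R)^j`, the `k`-th Leibniz term of
`D^n (f h)` is at most `N_R(f) N_{2R}(h) n! (2R)^n 2^{-k}`, and the geometric series is at most 2.
Peeling off one factor at a time, starting from `N_{2R} ≤ N_R`, gives the factor `2^{p-1}`. -/

open scoped Nat BigOperators ENNReal

/-- The analytic norm `N_R(g) = sup_{p} ‖D^p g‖_J / (p! R^p)`, valued in `ℝ≥0∞`,
with `‖·‖_J` the sup norm over `J` and derivatives taken within `J`. -/
noncomputable def anorm (J : Set ℝ) (R : ℝ) (g : ℝ → ℂ) : ℝ≥0∞ :=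
  ⨆ p : ℕ, (⨆ t ∈ J, (‖iteratedDerivWithin p g J t‖₊ : ℝ≥0∞)) /
    ENNReal.ofReal (p ! * R ^ p)

open Finset
open scoped ContDiff

theorem enorm_iteratedDerivWithin_mul_le {𝕜 A : Type*} [NontriviallyNormedField 𝕜]
    [NormedRing A] [NormedAlgebra 𝕜 A] {s : Set 𝕜} {f h : 𝕜 → A} (hs : UniqueDiffOn 𝕜 s)
    (hf : ContDiffOn 𝕜 ∞ f s) (hh : ContDiffOn 𝕜 ∞ h s) {t : 𝕜} (ht : t ∈ s) (n : ℕ) :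
    ‖iteratedDerivWithin n (f * h) s t‖ₑ ≤
      ∑ k ∈ range (n + 1), (n.choose k : ℝ≥0∞) * ‖iteratedDerivWithin k f s t‖ₑ *
        ‖iteratedDerivWithin (n - k) h s t‖ₑ := by
  have hle := norm_iteratedFDerivWithin_mul_le hf hh hs ht (n := n) (mod_cast le_top)
  simp only [norm_iteratedFDerivWithin_eq_norm_iteratedDerivWithin] at hle
  rw [← ofReal_norm]
  refine (ENNReal.ofReal_le_ofReal hle).trans_eq ?_
  rw [ENNReal.ofReal_sum_of_nonneg fun k _ => by positivity]
  refine sum_congr rfl fun k _ => ?_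
  rw [ENNReal.ofReal_mul (by positivity), ENNReal.ofReal_mul (by positivity),
    ENNReal.ofReal_natCast, ofReal_norm, ofReal_norm]

theorem sum_choose_mul_factorial_pow_le (n : ℕ) {R : ℝ} (hR : 0 ≤ R) :
    ∑ k ∈ range (n + 1), (n.choose k : ℝ) * (k ! * R ^ k) * ((n - k)! * (2 * R) ^ (n - k))
      ≤ 2 * (n ! * (2 * R) ^ n) := by
  have hterm : ∀ k ∈ range (n + 1),
      (n.choose k : ℝ) * (k ! * R ^ k) * ((n - k)! * (2 * R) ^ (n - k))
        = n ! * (2 * R) ^ n * (1 / 2) ^ k := by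
    intro k hk
    have hkn : k ≤ n := Nat.lt_succ_iff.1 (mem_range.1 hk)
    have hfact : (n.choose k : ℝ) * k ! * (n - k)! = n ! := by
      exact_mod_cast Nat.choose_mul_factorial_mul_factorial hkn
    rw [← hfact, ← Nat.add_sub_cancel' hkn, pow_add, Nat.add_sub_cancel_left, mul_pow,
      mul_pow, one_div_pow]
    field_simp
  rw [sum_congr rfl hterm, ← mul_sum, mul_comm 2 (n ! * (2 * R) ^ n)]
  gcongr
  exact sum_geometric_two_le _

section AnalyticNorm

variable {J : Set ℝ} {R : ℝ}

theorem anorm_le_iff {g : ℝ → ℂ} (hR : 0 < R) {c : ℝ≥0∞} :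
    anorm J R g ≤ c ↔
      ∀ n : ℕ, ∀ t ∈ J, ‖iteratedDerivWithin n g J t‖ₑ ≤ c * ENNReal.ofReal (n ! * R ^ n) := by
  simp only [anorm, iSup_le_iff]
  refine forall_congr' fun n => ?_
  have hpos : 0 < n ! * R ^ n := by positivity
  rw [ENNReal.div_le_iff_le_mul (Or.inl (ENNReal.ofReal_pos.2 hpos).ne')
    (Or.inl ENNReal.ofReal_ne_top)]
  simp only [iSup_le_iff, enorm_eq_nnnorm]

theorem anorm_antitone_radius {g : ℝ → ℂ} {R' : ℝ} (hR : 0 < R) (hRR' : R ≤ R') :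
    anorm J R' g ≤ anorm J R g := by
  rw [anorm_le_iff (hR.trans_le hRR')]
  intro n t ht
  calc ‖iteratedDerivWithin n g J t‖ₑ ≤ anorm J R g * ENNReal.ofReal (n ! * R ^ n) :=
        (anorm_le_iff hR).1 le_rfl n t ht
    _ ≤ anorm J R g * ENNReal.ofReal (n ! * R' ^ n) := by gcongr

theorem anorm_two_mul_mul_le (hJ : UniqueDiffOn ℝ J) (hR : 0 < R) {f h : ℝ → ℂ}
    (hf : ContDiffOn ℝ ∞ f J) (hh : ContDiffOn ℝ ∞ h J) :
    anorm J (2 * R) (f * h) ≤ 2 * anorm J R f * anorm J (2 * R) h := by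
  have hR2 : 0 < 2 * R := by positivity
  have hfR := (anorm_le_iff (g := f) (J := J) hR).1 le_rfl
  have hh2R := (anorm_le_iff (g := h) (J := J) hR2).1 le_rfl
  rw [anorm_le_iff hR2]
  intro n t ht
  set a := anorm J R f
  set b := anorm J (2 * R) h
  calc ‖iteratedDerivWithin n (f * h) J t‖ₑ
      ≤ ∑ k ∈ range (n + 1), (n.choose k : ℝ≥0∞) * ‖iteratedDerivWithin k f J t‖ₑ *
          ‖iteratedDerivWithin (n - k) h J t‖ₑ :=
        enorm_iteratedDerivWithin_mul_le hJ hf hh ht n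
    _ ≤ ∑ k ∈ range (n + 1), (n.choose k : ℝ≥0∞) * (a * ENNReal.ofReal (k ! * R ^ k)) *
          (b * ENNReal.ofReal ((n - k)! * (2 * R) ^ (n - k))) := by
        gcongr with k
        exacts [hfR k t ht, hh2R (n - k) t ht]
    _ = a * b * ENNReal.ofReal (∑ k ∈ range (n + 1),
          (n.choose k : ℝ) * (k ! * R ^ k) * ((n - k)! * (2 * R) ^ (n - k))) := by
        rw [ENNReal.ofReal_sum_of_nonneg fun k _ => by positivity, mul_sum]
        refine sum_congr rfl fun k _ => ?_
        rw [ENNReal.ofReal_mul (by positivity : (0 : ℝ) ≤ n.choose k * (k ! * R ^ k)),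
          ENNReal.ofReal_mul (Nat.cast_nonneg (n.choose k)), ENNReal.ofReal_natCast]
        ring
    _ ≤ a * b * ENNReal.ofReal (2 * (n ! * (2 * R) ^ n)) := by
        gcongr
        exact sum_choose_mul_factorial_pow_le n hR.le
    _ = 2 * a * b * ENNReal.ofReal (n ! * (2 * R) ^ n) := by
        rw [ENNReal.ofReal_mul zero_le_two, ENNReal.ofReal_ofNat]
        ring

theorem anorm_two_mul_prod_le (hJ : UniqueDiffOn ℝ J) (hR : 0 < R) {q : ℕ}
    (g : Fin (q + 1) → ℝ → ℂ) (hg : ∀ i, ContDiffOn ℝ ∞ (g i) J) :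
    anorm J (2 * R) (∏ i, g i) ≤ 2 ^ q * ∏ i, anorm J R (g i) := by
  induction q with
  | zero => simpa using anorm_antitone_radius hR (by linarith)
  | succ q ih =>
    rw [Fin.prod_univ_succ g, Fin.prod_univ_succ fun i => anorm J R (g i)]
    calc anorm J (2 * R) (g 0 * ∏ i : Fin (q + 1), g i.succ)
        ≤ 2 * anorm J R (g 0) * anorm J (2 * R) (∏ i : Fin (q + 1), g i.succ) :=
          anorm_two_mul_mul_le hJ hR (hg 0) (contDiffOn_prod' fun i _ => hg i.succ)
      _ ≤ 2 * anorm J R (g 0) * (2 ^ q * ∏ i : Fin (q + 1), anorm J R (g i.succ)) := by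
          gcongr
          exact ih _ fun i => hg i.succ
      _ = 2 ^ (q + 1) * (anorm J R (g 0) * ∏ i : Fin (q + 1), anorm J R (g i.succ)) := by
          ring

end AnalyticNorm

theorem stmt15_general (a b : ℝ) (hab : a < b) (J : Set ℝ) (hJ : J = Set.Icc a b)
    (R : ℝ) (hR : 0 < R) (p : ℕ) (hp : 1 ≤ p) (g : Fin p → ℝ → ℂ)
    (hg : ∀ i, ContDiffOn ℝ ⊤ (g i) J) :
    anorm J (2 * R) (∏ i, g i) ≤ 2 ^ (p - 1) * ∏ i, anorm J R (g i) := by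
  subst hJ
  obtain ⟨q, rfl⟩ := Nat.exists_eq_add_of_le' hp
  simpa using anorm_two_mul_prod_le (uniqueDiffOn_Icc hab) hR g fun i => (hg i).of_le le_top

theorem stmt15 (a b : ℝ) (hab : a < b) (J : Set ℝ) (hJ : J = Set.Icc a b)
    (R : ℝ) (hR : 0 < R) (p : ℕ) (hp : 1 ≤ p) (g : Fin p → ℝ → ℂ)
    (hg : ∀ i, ContDiffOn ℝ ⊤ (g i) J) (hfin : ∀ i, anorm J R (g i) ≠ ⊤) :
    anorm J (2 * R) (∏ i, g i) ≤ 2 ^ (p - 1) * ∏ i, anorm J R (g i) :=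
  stmt15_general a b hab J hJ R hR p hp g hg
end

section
/- (Estimate for the Lagrange series coefficients.) Let J be a segment, u, g : J → ℂ real-analytic with N_R(u) < ∞ and N_S(g) < ∞, and set T = 2·max(R, 2S). Then for every integer n ≥ 1: N_{2T}( D^{n-1}(u^n · Dg) ) ≤ (S/T) · N_S(g) · n! · (4 N_R(u) T)^n. -/
open scoped Nat BigOperators ENNReal

lemma nat_choose_le_two_pow (n k : ℕ) : n.choose k ≤ 2 ^ n := by
  rcases le_or_gt k n with h | h
  · calc n.choose k ≤ ∑ j ∈ Finset.range (n + 1), n.choose j :=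
        Finset.single_le_sum (f := fun j => n.choose j) (fun _ _ => Nat.zero_le _)
          (Finset.mem_range.mpr (Nat.lt_succ_of_le h))
    _ = 2 ^ n := Nat.sum_range_choose n
  · rw [Nat.choose_eq_zero_of_lt h]; exact Nat.zero_le _

lemma natkey (p k : ℕ) :
    (p + k)! * ((p + k) + (k + 1)).choose (k + 1) ≤ (k + 1)! * p ! * (4 * 8 ^ k * 4 ^ p) := by
  have h1 : (p + k)! = (p + k).choose k * k ! * p ! := by
    have := Nat.choose_mul_factorial_mul_factorial (Nat.le_add_left k p)
    simpa using this.symm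
  have hpow : (4 * 8 ^ k * 4 ^ p : ℕ) = 2 ^ (3 * k + 2 * p + 2) := by
    rw [show (8:ℕ) = 2 ^ 3 from rfl, show (4:ℕ) = 2 ^ 2 from rfl, ← pow_mul, ← pow_mul,
      ← pow_add, ← pow_add]
    congr 1; omega
  have h2 : 2 ^ (p + k) * 2 ^ ((p + k) + (k + 1)) ≤ 2 ^ (3 * k + 2 * p + 2) := by
    rw [← pow_add]; exact Nat.pow_le_pow_right (by norm_num) (by omega)
  calc (p + k)! * ((p + k) + (k + 1)).choose (k + 1)
      = ((p + k).choose k * ((p + k) + (k + 1)).choose (k + 1)) * (k ! * p !) := by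
        rw [h1]; ring
    _ ≤ (2 ^ (p + k) * 2 ^ ((p + k) + (k + 1))) * (k ! * p !) :=
        Nat.mul_le_mul_right _ (Nat.mul_le_mul (nat_choose_le_two_pow _ _)
          (nat_choose_le_two_pow _ _))
    _ ≤ 2 ^ (3 * k + 2 * p + 2) * ((k + 1)! * p !) :=
        Nat.mul_le_mul h2 (Nat.mul_le_mul_right _ (Nat.factorial_le (Nat.le_succ k)))
    _ = (k + 1)! * p ! * (4 * 8 ^ k * 4 ^ p) := by rw [hpow]; ring

lemma sumid (m N : ℕ) :
    ∑ i ∈ Finset.range (m + 1), ((m - i) + N).choose N = (m + (N + 1)).choose (N + 1) := by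
  have := Finset.sum_range_reflect (fun j => (j + N).choose N) (m + 1)
  simp only [Nat.succ_sub_one] at this
  rw [show (∑ i ∈ Finset.range (m+1), ((m - i) + N).choose N)
      = ∑ j ∈ Finset.range (m+1), (j + N).choose N from this, Nat.sum_range_add_choose]
  congr 1

lemma anorm_pointwise {J : Set ℝ} {R : ℝ} (hR : 0 < R) {u : ℝ → ℂ}
    (hfin : anorm J R u ≠ ⊤) (p : ℕ) {t : ℝ} (ht : t ∈ J) :
    ‖iteratedDerivWithin p u J t‖ ≤ (anorm J R u).toReal * (p ! * R ^ p) := by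
  have hd : (0:ℝ) < p ! * R ^ p := by positivity
  have h1 : (⨆ s ∈ J, (‖iteratedDerivWithin p u J s‖₊ : ℝ≥0∞)) /
      ENNReal.ofReal (p ! * R ^ p) ≤ anorm J R u :=
    le_iSup (fun q => (⨆ s ∈ J, (‖iteratedDerivWithin q u J s‖₊ : ℝ≥0∞)) /
      ENNReal.ofReal (q ! * R ^ q)) p
  have h2 : (⨆ s ∈ J, (‖iteratedDerivWithin p u J s‖₊ : ℝ≥0∞)) ≤
      anorm J R u * ENNReal.ofReal (p ! * R ^ p) :=
    (ENNReal.div_le_iff (ENNReal.ofReal_pos.mpr hd).ne' ENNReal.ofReal_ne_top).mp h1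
  have h3 : (‖iteratedDerivWithin p u J t‖₊ : ℝ≥0∞) ≤
      anorm J R u * ENNReal.ofReal (p ! * R ^ p) :=
    le_trans (le_iSup₂ (f := fun s (_ : s ∈ J) => (‖iteratedDerivWithin p u J s‖₊ : ℝ≥0∞)) t ht) h2
  have h4 := ENNReal.toReal_mono (ENNReal.mul_ne_top hfin ENNReal.ofReal_ne_top) h3
  simpa [ENNReal.toReal_mul, ENNReal.toReal_ofReal hd.le, ENNReal.toReal_ofReal (pow_nonneg hR.le p)] using h4

theorem stmt17 (a b : ℝ) (hab : a < b) (J : Set ℝ) (hJ : J = Set.Icc a b)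
    (R S : ℝ) (hR : 0 < R) (hS : 0 < S) (u g : ℝ → ℂ)
    (hu : ContDiffOn ℝ (⊤ : ℕ∞) u J) (hg : ContDiffOn ℝ (⊤ : ℕ∞) g J)
    (hfinu : anorm J R u ≠ ⊤) (hfing : anorm J S g ≠ ⊤)
    (T : ℝ) (hT : T = 2 * max R (2 * S)) (n : ℕ) (hn : 1 ≤ n) :
    anorm J (2 * T) (iteratedDerivWithin (n - 1) (u ^ n * derivWithin g J) J) ≤
      ENNReal.ofReal (S / T) * anorm J S g * (n ! : ℝ≥0∞) *
        (4 * anorm J R u * ENNReal.ofReal T) ^ n := by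
  subst hJ
  subst hT
  set J : Set ℝ := Set.Icc a b with hJdef
  set ρ : ℝ := max R (2 * S) with hρdef
  have hρ : 0 < ρ := lt_of_lt_of_le hR (le_max_left _ _)
  have hRρ : R ≤ ρ := le_max_left _ _
  have hSρ : 2 * S ≤ ρ := le_max_right _ _
  have hJu : UniqueDiffOn ℝ J := uniqueDiffOn_Icc hab
  set Mu : ℝ := (anorm J R u).toReal with hMudef
  set Mg : ℝ := (anorm J S g).toReal with hMgdef
  have hMu : 0 ≤ Mu := ENNReal.toReal_nonneg
  have hMg : 0 ≤ Mg := ENNReal.toReal_nonneg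
  have hub : ∀ (p : ℕ) {t : ℝ}, t ∈ J → ‖iteratedDerivWithin p u J t‖ ≤ Mu * (p ! * R ^ p) :=
    fun p _ ht => anorm_pointwise hR hfinu p ht
  have hgb : ∀ (p : ℕ) {t : ℝ}, t ∈ J → ‖iteratedDerivWithin p g J t‖ ≤ Mg * (p ! * S ^ p) :=
    fun p _ ht => anorm_pointwise hS hfing p ht
  have hDg : ContDiffOn ℝ (⊤ : ℕ∞) (derivWithin g J) J := hg.derivWithin hJu (mod_cast le_top)
  -- composition of iterated derivatives
  have hcomp : ∀ (q p : ℕ) (f : ℝ → ℂ), ∀ t ∈ J,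
      iteratedDerivWithin p (iteratedDerivWithin q f J) J t
        = iteratedDerivWithin (p + q) f J t := by
    intro q p f
    induction p with
    | zero => intro t ht; simp
    | succ p ih =>
      intro t ht
      rw [iteratedDerivWithin_succ,
        derivWithin_congr (fun y hy => ih y hy) (ih t ht),
        ← iteratedDerivWithin_succ,
        show p + q + 1 = p + 1 + q from by omega]
  -- the key inductive bound
  have key : ∀ (N m : ℕ), ∀ t ∈ J,
      ‖iteratedDerivWithin m (fun x => u x ^ N * derivWithin g J x) J t‖ ≤
        Mu ^ N * (S * Mg) * m ! * ρ ^ m * (((m + N).choose N : ℕ) : ℝ) := by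
    intro N
    induction N with
    | zero =>
      intro m t ht
      have he : (fun x => u x ^ 0 * derivWithin g J x) = derivWithin g J := by
        funext x; simp
      rw [he, ← iteratedDerivWithin_succ']
      have hSMgm : (0:ℝ) ≤ S * Mg * m ! := by
        exact mul_nonneg (mul_nonneg hS.le hMg) (Nat.cast_nonneg _)
      have h2m : (m + 1 : ℕ) ≤ 2 ^ m := Nat.lt_two_pow_self (n := m)
      calc ‖iteratedDerivWithin (m + 1) g J t‖ ≤ Mg * ((m + 1)! * S ^ (m + 1)) := hgb (m + 1) ht
        _ = (S * Mg * m !) * ((m + 1) * S ^ m) := by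
            rw [Nat.factorial_succ]; push_cast; ring
        _ ≤ (S * Mg * m !) * ((2 * S) ^ m) := by
            refine mul_le_mul_of_nonneg_left ?_ hSMgm
            rw [mul_pow]
            refine mul_le_mul_of_nonneg_right ?_ (by positivity)
            exact_mod_cast h2m
        _ ≤ (S * Mg * m !) * ρ ^ m :=
            mul_le_mul_of_nonneg_left (pow_le_pow_left₀ (by positivity) hSρ m) hSMgm
        _ = Mu ^ 0 * (S * Mg) * m ! * ρ ^ m * (((m + 0).choose 0 : ℕ) : ℝ) := by
            simp
    | succ N ih =>
      intro m t ht
      have heq : (fun x => u x ^ (N + 1) * derivWithin g J x)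
          = fun x => u x * (u x ^ N * derivWithin g J x) := by
        funext x; ring
      rw [heq]
      have hF : ContDiffOn ℝ (⊤ : ℕ∞) (fun x => u x ^ N * derivWithin g J x) J :=
        (hu.pow N).mul hDg
      have hpre : (0:ℝ) ≤ Mu ^ (N + 1) * (S * Mg) * m ! * ρ ^ m :=
        mul_nonneg (mul_nonneg (mul_nonneg (pow_nonneg hMu _) (mul_nonneg hS.le hMg))
          (Nat.cast_nonneg _)) (pow_nonneg hρ.le _)
      calc ‖iteratedDerivWithin m (fun x => u x * (u x ^ N * derivWithin g J x)) J t‖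
          = ‖iteratedFDerivWithin ℝ m (fun x => u x * (u x ^ N * derivWithin g J x)) J t‖ :=
            (norm_iteratedFDerivWithin_eq_norm_iteratedDerivWithin).symm
        _ ≤ ∑ i ∈ Finset.range (m + 1), (m.choose i : ℝ) * ‖iteratedFDerivWithin ℝ i u J t‖
              * ‖iteratedFDerivWithin ℝ (m - i) (fun x => u x ^ N * derivWithin g J x) J t‖ :=
            norm_iteratedFDerivWithin_mul_le hu hF hJu ht (mod_cast le_top)
        _ = ∑ i ∈ Finset.range (m + 1), (m.choose i : ℝ) * ‖iteratedDerivWithin i u J t‖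
              * ‖iteratedDerivWithin (m - i) (fun x => u x ^ N * derivWithin g J x) J t‖ := by
            simp only [norm_iteratedFDerivWithin_eq_norm_iteratedDerivWithin]
        _ ≤ ∑ i ∈ Finset.range (m + 1),
              (Mu ^ (N + 1) * (S * Mg) * m ! * ρ ^ m) * ((((m - i) + N).choose N : ℕ) : ℝ) := by
            refine Finset.sum_le_sum ?_
            intro i hi
            have him : i ≤ m := Nat.lt_succ_iff.mp (Finset.mem_range.mp hi)
            have t1 : ‖iteratedDerivWithin i u J t‖ ≤ Mu * (i ! * R ^ i) := hub i ht
            have t2 := ih (m - i) t ht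
            have hCnn : (0:ℝ) ≤ (((m - i) + N).choose N : ℕ) := Nat.cast_nonneg _
            have hfact : ((m.choose i : ℕ) : ℝ) * (i ! : ℝ) * ((m - i)! : ℝ) = (m ! : ℝ) := by
              exact_mod_cast Nat.choose_mul_factorial_mul_factorial him
            have hpre2 : (0:ℝ) ≤ Mu ^ (N + 1) * (S * Mg) * (((m - i) + N).choose N : ℕ) * m ! :=
              mul_nonneg (mul_nonneg (mul_nonneg (pow_nonneg hMu _)
                (mul_nonneg hS.le hMg)) hCnn) (Nat.cast_nonneg _)
            calc (m.choose i : ℝ) * ‖iteratedDerivWithin i u J t‖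
                  * ‖iteratedDerivWithin (m - i) (fun x => u x ^ N * derivWithin g J x) J t‖
                ≤ (m.choose i : ℝ) * (Mu * (i ! * R ^ i))
                  * (Mu ^ N * (S * Mg) * (m - i)! * ρ ^ (m - i)
                      * ((((m - i) + N).choose N : ℕ) : ℝ)) := by
                  refine mul_le_mul (mul_le_mul_of_nonneg_left t1 (Nat.cast_nonneg _)) t2
                    (norm_nonneg _) ?_
                  exact mul_nonneg (Nat.cast_nonneg _) (mul_nonneg hMu (by positivity))
              _ = (Mu ^ (N + 1) * (S * Mg) * ((((m - i) + N).choose N : ℕ) : ℝ))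
                  * (((m.choose i : ℕ) : ℝ) * (i ! : ℝ) * ((m - i)! : ℝ)) * (R ^ i * ρ ^ (m - i)) := by
                  ring
              _ = (Mu ^ (N + 1) * (S * Mg) * ((((m - i) + N).choose N : ℕ) : ℝ))
                  * (m ! : ℝ) * (R ^ i * ρ ^ (m - i)) := by rw [hfact]
              _ ≤ (Mu ^ (N + 1) * (S * Mg) * ((((m - i) + N).choose N : ℕ) : ℝ))
                  * (m ! : ℝ) * ρ ^ m := by
                  refine mul_le_mul_of_nonneg_left ?_ hpre2
                  calc R ^ i * ρ ^ (m - i)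
                      ≤ ρ ^ i * ρ ^ (m - i) :=
                        mul_le_mul_of_nonneg_right (pow_le_pow_left₀ hR.le hRρ i) (by positivity)
                    _ = ρ ^ m := by rw [← pow_add, Nat.add_sub_cancel' him]
              _ = (Mu ^ (N + 1) * (S * Mg) * m ! * ρ ^ m) * ((((m - i) + N).choose N : ℕ) : ℝ) := by
                  ring
        _ = (Mu ^ (N + 1) * (S * Mg) * m ! * ρ ^ m)
              * (∑ i ∈ Finset.range (m + 1), ((((m - i) + N).choose N : ℕ) : ℝ)) := by
            rw [← Finset.mul_sum]
        _ = Mu ^ (N + 1) * (S * Mg) * m ! * ρ ^ m * (((m + (N + 1)).choose (N + 1) : ℕ) : ℝ) := by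
            have hsum : (∑ i ∈ Finset.range (m + 1), ((((m - i) + N).choose N : ℕ) : ℝ))
                = (((m + (N + 1)).choose (N + 1) : ℕ) : ℝ) := by exact_mod_cast sumid m N
            rw [hsum]
  -- reduce to a single exponent
  obtain ⟨k, rfl⟩ : ∃ k, n = k + 1 := ⟨n - 1, (Nat.succ_pred_eq_of_pos hn).symm⟩
  simp only [Nat.add_sub_cancel]
  -- rewrite the RHS as an `ofReal`
  have hgu : anorm J S g = ENNReal.ofReal Mg := (ENNReal.ofReal_toReal hfing).symm
  have huu : anorm J R u = ENNReal.ofReal Mu := (ENNReal.ofReal_toReal hfinu).symm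
  set C : ℝ := S / (2 * ρ) * Mg * ((k + 1)! : ℝ) * (4 * Mu * (2 * ρ)) ^ (k + 1) with hCdef
  have h1 : (0:ℝ) ≤ S / (2 * ρ) := by positivity
  have h2 : (0:ℝ) ≤ S / (2 * ρ) * Mg := mul_nonneg h1 hMg
  have h3 : (0:ℝ) ≤ S / (2 * ρ) * Mg * ((k + 1)! : ℝ) := mul_nonneg h2 (Nat.cast_nonneg _)
  have h4 : (0:ℝ) ≤ 4 * Mu := mul_nonneg (by norm_num) hMu
  have h5 : (0:ℝ) ≤ 4 * Mu * (2 * ρ) := mul_nonneg h4 (by positivity)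
  have hRHS : ENNReal.ofReal C = ENNReal.ofReal (S / (2 * ρ)) * anorm J S g * ((k + 1)! : ℝ≥0∞) *
      (4 * anorm J R u * ENNReal.ofReal (2 * ρ)) ^ (k + 1) := by
    rw [hgu, huu, hCdef, ENNReal.ofReal_mul h3, ENNReal.ofReal_pow h5, ENNReal.ofReal_mul h2,
      ENNReal.ofReal_mul h1, ENNReal.ofReal_mul h4, ENNReal.ofReal_mul (by norm_num : (0:ℝ) ≤ 4),
      ENNReal.ofReal_natCast, ENNReal.ofReal_ofNat]
  rw [← hRHS]
  -- pointwise estimate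
  refine iSup_le fun p => ?_
  refine ENNReal.div_le_of_le_mul' ?_
  refine iSup₂_le fun t ht => ?_
  rw [← enorm_eq_nnnorm, ← ofReal_norm, ← ENNReal.ofReal_mul (by positivity)]
  refine ENNReal.ofReal_le_ofReal ?_
  have hfun : (u ^ (k + 1) * derivWithin g J)
      = fun x => u x ^ (k + 1) * derivWithin g J x := rfl
  rw [hfun, hcomp k p _ t ht]
  have hb := key (k + 1) (p + k) t ht
  have hnat := natkey p k
  have hnn : (0:ℝ) ≤ S * Mg * Mu ^ (k + 1) * ρ ^ (p + k) :=
    mul_nonneg (mul_nonneg (mul_nonneg hS.le hMg) (pow_nonneg hMu _)) (pow_nonneg hρ.le _)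
  calc ‖iteratedDerivWithin (p + k) (fun x => u x ^ (k + 1) * derivWithin g J x) J t‖
      ≤ Mu ^ (k + 1) * (S * Mg) * (((p + k)!) : ℝ) * ρ ^ (p + k)
        * ((((p + k) + (k + 1)).choose (k + 1) : ℕ) : ℝ) := hb
    _ = (S * Mg * Mu ^ (k + 1) * ρ ^ (p + k))
        * (((p + k)! * ((p + k) + (k + 1)).choose (k + 1) : ℕ) : ℝ) := by
        push_cast; ring
    _ ≤ (S * Mg * Mu ^ (k + 1) * ρ ^ (p + k))
        * (((k + 1)! * p ! * (4 * 8 ^ k * 4 ^ p) : ℕ) : ℝ) := by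
        refine mul_le_mul_of_nonneg_left ?_ hnn
        exact_mod_cast hnat
    _ = (p ! * (2 * (2 * ρ)) ^ p) * C := by
        rw [hCdef]
        push_cast
        field_simp
        ring
end
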